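/- Uniform concentration of local densities (Lemma 3.2): Let μ > 0, ε, δ > 0, r, R ∈ ℕ with r ≤ R, and let (ζ_k^{r,−}, ζ_k^{r,+})_{k=0,…,k_0} be (ε,δ,r)-comparison density profiles. Let (U(y,k))_{y∈ℤ^d, k∈ℤ} be i.i.d. Uniform[0,1] random variables. Then for every k ∈ {0,…,k_0−1} with 0 ∈ Supp(ζ_k^{r,−}) and 0 ∈ Supp(ζ_{k+1}^{r,−}), with probability at least 1 − 2 e^{−c V_r^d}, where c = (δε)/(1/(2δε) + 2/3), the following holds: for every configuration η̃ ∈ {0,1}^{ℤ^d} such that δ_R(y; η̃) ∈ [ζ_k^{r,−}(y), ζ_k^{r,+}(y)] for all y ∈ B_r(0), one has V_r^{−d} Σ_{y∈B_r(0)} 1{U(y,k) ≤ φ_μ(δ_R(y; η̃))} ∈ [ζ_{k+1}^{r,−}(0), ζ_{k+1}^{r,+}(0)]. -/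

import Mathlib

open MeasureTheory ProbabilityTheory

/-- Sites of the lattice `ℤ^d`. -/
abbrev Site (d : ℕ) := Fin d → ℤ

/-- Particle configurations `{0,1}^{ℤ^d}`. -/
abbrev Config (d : ℕ) := (Fin d → ℤ) → Bool

/-- The sup-norm ball `B_r(z) ⊆ ℤ^d` (a box), as a finite set. -/
noncomputable def ball (d r : ℕ) (z : Site d) : Finset (Site d) :=
  Finset.Icc (fun i => z i - r) (fun i => z i + r)

/-- The local density `δ_R(z; η) = V_R^{-d} Σ_{x ∈ B_R(z)} η(x)`, `V_R = 2R+1`. -/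
noncomputable def localDensity (d R : ℕ) (z : Site d) (η : Config d) : ℝ :=
  (∑ x ∈ ball d R z, if η x then (1 : ℝ) else 0) / (2 * R + 1) ^ d

/-- `φ_μ(w) = μ w e^{-μ w}`. -/
noncomputable def phi (μ w : ℝ) : ℝ := μ * w * Real.exp (-(μ * w))

/-- The uniform distribution on `[0,1]`. -/
noncomputable def unif : Measure ℝ := volume.restrict (Set.Icc 0 1)

/-- Definition 3.1: `(ε,δ,r)`-comparison density profiles `(ζ_k^{r,-}, ζ_k^{r,+})_{k ≤ k0}`. -/
def IsCDP (d : ℕ) (μ ε δ : ℝ) (r k0 : ℕ) (ζm ζp : ℕ → Site d → ℝ) : Prop :=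
  -- (i) `0 ≤ ζ_k^- ≤ ζ_k^+`
  (∀ k ≤ k0, ∀ x, 0 ≤ ζm k x ∧ 0 ≤ ζp k x ∧ ζm k x ≤ ζp k x) ∧
  -- (ii) supports are finite and `ζ_k^- ≥ ε` on its support
  (∀ k ≤ k0, {x : Site d | 0 < ζm k x}.Finite ∧ ∀ x, 0 < ζm k x → ε ≤ ζm k x) ∧
  -- (iii) one-step contraction of the wedge
  (∀ k < k0, ∀ x : Site d, 0 < ζm k x → ∀ ρ : Site d → ℝ,
    (∀ y ∈ ball d r x, ρ y ∈ Set.Icc (ζm k y) (ζp k y)) →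
    (1 + δ) * ζm (k + 1) x ≤ (∑ y ∈ ball d r x, phi μ (ρ y)) / (2 * r + 1) ^ d ∧
    (∑ y ∈ ball d r x, phi μ (ρ y)) / (2 * r + 1) ^ d ≤ (1 - δ) * ζp (k + 1) x)

/- ### Auxiliary lemmas -/
section Aux
open Real

lemma bernoulli_mgf_le (q t : ℝ) (h0 : 0 ≤ q) (h1 : q ≤ 1) :
    1 - q + q * exp t ≤ exp (t * q + t ^ 2 / 8) := by
  set D : ℝ → ℝ := fun t => 1 - q + q * exp t with hDdef
  have hDpos : ∀ s, 0 < D s := by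
    intro s
    rcases eq_or_lt_of_le h1 with h | h
    · simp [hDdef, h, exp_pos]
    · have : 0 ≤ q * exp s := mul_nonneg h0 (exp_pos s).le
      simp only [hDdef]; nlinarith
  have hD : ∀ s, HasDerivAt D (q * exp s) s := by
    intro s
    exact ((Real.hasDerivAt_exp s).const_mul q).const_add (1 - q)
  set G : ℝ → ℝ := fun s => q + s / 4 - q * exp s / D s with hGdef
  have hG0 : G 0 = 0 := by simp [hGdef, hDdef]
  have hG : ∀ s, HasDerivAt G (1 / 4 - q * (1 - q) * exp s / (D s) ^ 2) s := by
    intro s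
    have h1' : HasDerivAt (fun s => q * exp s) (q * exp s) s :=
      (Real.hasDerivAt_exp s).const_mul q
    have hq : HasDerivAt (fun s => q * exp s / D s)
        ((q * exp s * D s - q * exp s * (q * exp s)) / (D s) ^ 2) s :=
      h1'.div (hD s) (hDpos s).ne'
    have h2 : HasDerivAt (fun s => q + s / 4) (1 / 4) s := by
      simpa using ((hasDerivAt_id s).div_const 4).const_add q
    have := h2.sub hq
    convert this using 1
    · rfl
    have hne : (D s) ^ 2 ≠ 0 := pow_ne_zero _ (hDpos s).ne'
    congr 1
    congr 1
    simp only [hDdef]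
    ring
  have hG'nonneg : ∀ s, 0 ≤ 1 / 4 - q * (1 - q) * exp s / (D s) ^ 2 := by
    intro s
    rw [sub_nonneg, div_le_iff₀ (pow_pos (hDpos s) 2)]
    have : 0 ≤ ((1 - q) - q * exp s) ^ 2 := sq_nonneg _
    simp only [hDdef]
    nlinarith
  have hGmono : Monotone G := monotone_of_hasDerivAt_nonneg hG hG'nonneg
  set F : ℝ → ℝ := fun s => s * q + s ^ 2 / 8 - Real.log (D s) with hFdef
  have hF : ∀ s, HasDerivAt F (G s) s := by
    intro s
    have hlog : HasDerivAt (fun s => Real.log (D s)) (q * exp s / D s) s :=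
      (hD s).log (hDpos s).ne'
    have h2 : HasDerivAt (fun s => s * q + s ^ 2 / 8) (q + s / 4) s := by
      have h3 : HasDerivAt (fun u : ℝ => u * q) q s := by
        simpa using (hasDerivAt_id s).mul_const q
      have := h3.add ((hasDerivAt_pow 2 s).div_const 8)
      refine this.congr_deriv ?_
      rw [show (2:ℕ) - 1 = 1 from rfl, pow_one, Nat.cast_ofNat]
      ring
    exact h2.sub hlog
  have hF0 : F 0 = 0 := by simp [hFdef, hDdef]
  have hFt : 0 ≤ F t := by
    rcases le_total 0 t with h | h
    · have hmono : MonotoneOn F (Set.Ici 0) := by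
        apply monotoneOn_of_hasDerivWithinAt_nonneg (convex_Ici 0)
          (fun s _ => (hF s).continuousAt.continuousWithinAt)
          (fun s _ => (hF s).hasDerivWithinAt)
        intro s hs
        rw [interior_Ici] at hs
        have := hGmono (le_of_lt hs)
        rw [hG0] at this
        exact this
      have := hmono Set.self_mem_Ici h h
      rwa [hF0] at this
    · have hanti : AntitoneOn F (Set.Iic 0) := by
        apply antitoneOn_of_hasDerivWithinAt_nonpos (convex_Iic 0)
          (fun s _ => (hF s).continuousAt.continuousWithinAt)
          (fun s _ => (hF s).hasDerivWithinAt)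
        intro s hs
        rw [interior_Iic] at hs
        have := hGmono (le_of_lt hs)
        rw [hG0] at this
        exact this
      have := hanti h Set.self_mem_Iic h
      rwa [hF0] at this
  have hlogD : Real.log (D t) ≤ t * q + t ^ 2 / 8 := by
    simp only [hFdef] at hFt; linarith
  calc D t = exp (Real.log (D t)) := (exp_log (hDpos t)).symm
    _ ≤ exp (t * q + t ^ 2 / 8) := exp_le_exp.mpr hlogD

end Aux

lemma iIndepFun_congr {ι Ω : Type*} [MeasurableSpace Ω] {P : Measure Ω}
    {f g : ι → Ω → ℝ} (hf : iIndepFun f P)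
    (h : ∀ i, f i =ᵐ[P] g i) : iIndepFun g P := by
  rw [iIndepFun_iff_measure_inter_preimage_eq_mul] at hf ⊢
  intro S sets hsets
  have hpre : ∀ i, (f i ⁻¹' sets i : Set Ω) =ᵐ[P] (g i ⁻¹' sets i) := by
    intro i
    rw [Filter.eventuallyEq_set]
    filter_upwards [h i] with ω hω
    simp only [Set.mem_preimage, hω]
  have hinter : ((⋂ i ∈ S, f i ⁻¹' sets i : Set Ω)) =ᵐ[P] (⋂ i ∈ S, g i ⁻¹' sets i) := by
    rw [Filter.eventuallyEq_set]
    have hall : ∀ᵐ ω ∂P, ∀ i ∈ S, f i ω = g i ω := by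
      rw [Filter.eventually_all_finset]
      intro i _
      exact h i
    filter_upwards [hall] with ω hω
    simp only [Set.mem_iInter, Set.mem_preimage]
    constructor
    · intro hmem i hi; rw [← hω i hi]; exact hmem i hi
    · intro hmem i hi; rw [hω i hi]; exact hmem i hi
  rw [measure_congr hinter.symm, hf S hsets]
  exact Finset.prod_congr rfl fun i _ => measure_congr (hpre i)

lemma mgf_indicator_le {Ω : Type*} [MeasurableSpace Ω] {P : Measure Ω}
    [IsProbabilityMeasure P] {X : Ω → ℝ} (hX : Measurable X) (c t : ℝ) :
    mgf (fun ω => if X ω ≤ c then (1 : ℝ) else 0) P t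
      = 1 - (P {ω | X ω ≤ c}).toReal + (P {ω | X ω ≤ c}).toReal * Real.exp t := by
  have hA : MeasurableSet {ω | X ω ≤ c} := hX measurableSet_Iic
  have hfun : (fun ω => Real.exp (t * if X ω ≤ c then (1 : ℝ) else 0))
      = fun ω => Set.indicator {ω | X ω ≤ c} (fun _ => Real.exp t - 1) ω + 1 := by
    ext ω
    by_cases h : X ω ≤ c
    · simp [h, Set.indicator_of_mem, Set.mem_setOf_eq]
    · simp [h, Set.indicator_of_notMem, Set.mem_setOf_eq]
  rw [mgf, hfun, integral_add ((integrable_const _).indicator hA) (integrable_const 1),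
    integral_indicator_const _ hA, integral_const]
  simp [measure_univ]
  rw [measureReal_def]
  ring

section chernoff
variable {Ω ι : Type*} [MeasurableSpace Ω] {P : Measure Ω} [IsProbabilityMeasure P]
  {S : Finset ι} {X : ι → Ω → ℝ} {q : ι → ℝ} {t : ℝ}

lemma sum_mgf_bound (hindep : iIndepFun X P)
    (hmeas : ∀ i, Measurable (X i))
    (hmgf : ∀ i ∈ S, mgf (X i) P t ≤ Real.exp (t * q i + t ^ 2 / 8)) :
    mgf (∑ i ∈ S, X i) P t ≤ Real.exp (t * ∑ i ∈ S, q i + S.card * (t ^ 2 / 8)) := by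
  rw [hindep.mgf_sum hmeas]
  calc ∏ i ∈ S, mgf (X i) P t ≤ ∏ i ∈ S, Real.exp (t * q i + t ^ 2 / 8) :=
        Finset.prod_le_prod (fun i _ => mgf_nonneg) (fun i hi => hmgf i hi)
    _ = Real.exp (∑ i ∈ S, (t * q i + t ^ 2 / 8)) := (Real.exp_sum _ _).symm
    _ = _ := by rw [Finset.sum_add_distrib, ← Finset.mul_sum, Finset.sum_const, nsmul_eq_mul]

lemma integrable_exp_sum_indicator (hmeas : ∀ i, Measurable (X i))
    (h01 : ∀ i ω, X i ω = 0 ∨ X i ω = 1) (t : ℝ) :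
    Integrable (fun ω => Real.exp (t * (∑ i ∈ S, X i) ω)) P := by
  have hm : Measurable fun ω => Real.exp (t * (∑ i ∈ S, X i) ω) := by
    have : Measurable (∑ i ∈ S, X i) := by
      rw [show (∑ i ∈ S, X i) = fun ω => ∑ i ∈ S, X i ω from
        funext fun ω => Finset.sum_apply ω S X]
      exact Finset.measurable_sum S fun i _ => hmeas i
    exact (this.const_mul t).exp
  refine (integrable_const (Real.exp (|t| * S.card))).mono' hm.aestronglyMeasurable ?_
  refine Filter.Eventually.of_forall fun ω => ?_
  rw [Real.norm_eq_abs, Real.abs_exp, Real.exp_le_exp]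
  have h0 : (0:ℝ) ≤ (∑ i ∈ S, X i) ω := by
    rw [Finset.sum_apply]
    exact Finset.sum_nonneg fun i _ => by rcases h01 i ω with h | h <;> simp [h]
  have h1 : (∑ i ∈ S, X i) ω ≤ S.card := by
    rw [Finset.sum_apply]
    calc ∑ i ∈ S, X i ω ≤ ∑ i ∈ S, 1 :=
          Finset.sum_le_sum fun i _ => by rcases h01 i ω with h | h <;> simp [h]
      _ = S.card := by simp
  calc t * (∑ i ∈ S, X i) ω ≤ |t * (∑ i ∈ S, X i) ω| := le_abs_self _
    _ = |t| * (∑ i ∈ S, X i) ω := by rw [abs_mul, abs_of_nonneg h0]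
    _ ≤ |t| * S.card := by gcongr

lemma chernoff_upper (hindep : iIndepFun X P)
    (hmeas : ∀ i, Measurable (X i)) (h01 : ∀ i ω, X i ω = 0 ∨ X i ω = 1)
    (hmgf : ∀ i ∈ S, mgf (X i) P t ≤ Real.exp (t * q i + t ^ 2 / 8))
    (ht : 0 ≤ t) (b : ℝ) :
    (P {ω | b ≤ ∑ i ∈ S, X i ω}).toReal
      ≤ Real.exp (-t * b + (t * ∑ i ∈ S, q i + S.card * (t ^ 2 / 8))) := by
  have h := measure_ge_le_exp_mul_mgf (X := ∑ i ∈ S, X i) (μ := P) b ht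
    (integrable_exp_sum_indicator hmeas h01 t)
  have h2 : {ω | b ≤ (∑ i ∈ S, X i) ω} = {ω | b ≤ ∑ i ∈ S, X i ω} := by
    ext ω; simp [Finset.sum_apply]
  rw [h2] at h
  calc (P {ω | b ≤ ∑ i ∈ S, X i ω}).toReal
      ≤ Real.exp (-t * b) * mgf (∑ i ∈ S, X i) P t := h
    _ ≤ Real.exp (-t * b) * Real.exp (t * ∑ i ∈ S, q i + S.card * (t ^ 2 / 8)) := by
        gcongr
        exact sum_mgf_bound hindep hmeas hmgf
    _ = _ := by rw [← Real.exp_add]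

lemma chernoff_lower (hindep : iIndepFun X P)
    (hmeas : ∀ i, Measurable (X i)) (h01 : ∀ i ω, X i ω = 0 ∨ X i ω = 1)
    (hmgf : ∀ i ∈ S, mgf (X i) P t ≤ Real.exp (t * q i + t ^ 2 / 8))
    (ht : t ≤ 0) (b : ℝ) :
    (P {ω | ∑ i ∈ S, X i ω ≤ b}).toReal
      ≤ Real.exp (-t * b + (t * ∑ i ∈ S, q i + S.card * (t ^ 2 / 8))) := by
  have h := measure_le_le_exp_mul_mgf (X := ∑ i ∈ S, X i) (μ := P) b ht
    (integrable_exp_sum_indicator hmeas h01 t)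
  have h2 : {ω | (∑ i ∈ S, X i) ω ≤ b} = {ω | ∑ i ∈ S, X i ω ≤ b} := by
    ext ω; simp [Finset.sum_apply]
  rw [h2] at h
  calc (P {ω | ∑ i ∈ S, X i ω ≤ b}).toReal
      ≤ Real.exp (-t * b) * mgf (∑ i ∈ S, X i) P t := h
    _ ≤ Real.exp (-t * b) * Real.exp (t * ∑ i ∈ S, q i + S.card * (t ^ 2 / 8)) := by
        gcongr
        exact sum_mgf_bound hindep hmeas hmgf
    _ = _ := by rw [← Real.exp_add]

end chernoff

lemma card_ball (d r : ℕ) (z : Site d) : (ball d r z).card = (2 * r + 1) ^ d := by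
  rw [ball, Pi.card_Icc]
  have : ∀ i : Fin d, (Finset.Icc (z i - r) (z i + r)).card = 2 * r + 1 := by
    intro i
    rw [Int.card_Icc]
    omega
  simp [this]

lemma phi_nonneg {μ w : ℝ} (hμ : 0 ≤ μ) (hw : 0 ≤ w) : 0 ≤ phi μ w :=
  mul_nonneg (mul_nonneg hμ hw) (Real.exp_pos _).le

lemma phi_le_one {μ w : ℝ} (hμ : 0 ≤ μ) (hw : 0 ≤ w) : phi μ w ≤ 1 := by
  have h1 : μ * w ≤ Real.exp (μ * w) :=
    (le_add_of_nonneg_right zero_le_one).trans (Real.add_one_le_exp _)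
  rw [phi, Real.exp_neg, ← div_eq_mul_inv, div_le_one (Real.exp_pos _)]
  exact h1

set_option maxHeartbeats 1000000 in
/-- Lemma 3.2 (uniform concentration of local densities): with probability at least
`1 - 2 e^{-c V_r^d}`, `c = δε / (1/(2δε) + 2/3)`, the driving noise at time `k` is such
that *for every* configuration `η̃` whose `R`-densities on `B_r(0)` are wedged between the
profiles at stage `k`, the resulting `r`-density of new particles at `0` is wedged between
the profiles at stage `k+1`. -/
theorem uniform_concentration (d : ℕ) (hd : 1 ≤ d)
    (μ ε δ : ℝ) (hμ : 0 < μ) (hε : 0 < ε) (hδ : 0 < δ)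
    (r R k0 : ℕ) (hr : 1 ≤ r) (hrR : r ≤ R)
    (ζm ζp : ℕ → Site d → ℝ) (hcdp : IsCDP d μ ε δ r k0 ζm ζp)
    (Ω : Type) [MeasurableSpace Ω] (P : Measure Ω) (hP : IsProbabilityMeasure P)
    (U : Ω → Site d × ℤ → ℝ)
    (hindep : iIndepFun (fun (p : Site d × ℤ) (ω : Ω) => U ω p) P)
    (hunif : ∀ p : Site d × ℤ, P.map (fun ω => U ω p) = unif)
    (k : ℕ) (hk : k < k0) (h0 : 0 < ζm k 0) (h0' : 0 < ζm (k + 1) 0) :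
    ENNReal.ofReal
        (1 - 2 * Real.exp (-((δ * ε) / (1 / (2 * δ * ε) + 2 / 3) * (2 * r + 1) ^ d)))
      ≤ P {ω | ∀ η : Config d,
            (∀ y ∈ ball d r (0 : Site d),
              localDensity d R y η ∈ Set.Icc (ζm k y) (ζp k y)) →
            (∑ y ∈ ball d r (0 : Site d),
                if U ω (y, (k : ℤ)) ≤ phi μ (localDensity d R y η) then (1 : ℝ) else 0)
                / (2 * r + 1) ^ d
              ∈ Set.Icc (ζm (k + 1) 0) (ζp (k + 1) 0)} := by

  classical
  obtain ⟨hi, hii, hiii⟩ := hcdp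
  set B : Finset (Site d) := ball d r (0 : Site d) with hBdef
  set Vr : ℝ := (2 * (r : ℝ) + 1) ^ d with hVrdef
  have hVrpos : 0 < Vr := by positivity
  -- extremizers of phi on the wedge intervals
  have hphic : Continuous (phi μ) := by
    unfold phi; fun_prop
  have hwedge : ∀ y, ζm k y ≤ ζp k y := fun y => (hi k hk.le y).2.2
  have hminex : ∀ y : Site d, ∃ w ∈ Set.Icc (ζm k y) (ζp k y),
      ∀ v ∈ Set.Icc (ζm k y) (ζp k y), phi μ w ≤ phi μ v := by
    intro y
    obtain ⟨w, hw, hmin⟩ := isCompact_Icc.exists_isMinOn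
      (Set.nonempty_Icc.2 (hwedge y)) hphic.continuousOn
    exact ⟨w, hw, fun v hv => isMinOn_iff.1 hmin v hv⟩
  have hmaxex : ∀ y : Site d, ∃ w ∈ Set.Icc (ζm k y) (ζp k y),
      ∀ v ∈ Set.Icc (ζm k y) (ζp k y), phi μ v ≤ phi μ w := by
    intro y
    obtain ⟨w, hw, hmax⟩ := isCompact_Icc.exists_isMaxOn
      (Set.nonempty_Icc.2 (hwedge y)) hphic.continuousOn
    exact ⟨w, hw, fun v hv => isMaxOn_iff.1 hmax v hv⟩
  choose ρm hρm_mem hρm_min using hminex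
  choose ρp hρp_mem hρp_max using hmaxex
  have hρm01 : ∀ y, 0 ≤ phi μ (ρm y) ∧ phi μ (ρm y) ≤ 1 := by
    intro y
    have h0le : 0 ≤ ρm y := le_trans (hi k hk.le y).1 (hρm_mem y).1
    exact ⟨phi_nonneg hμ.le h0le, phi_le_one hμ.le h0le⟩
  have hρp01 : ∀ y, 0 ≤ phi μ (ρp y) ∧ phi μ (ρp y) ≤ 1 := by
    intro y
    have h0le : 0 ≤ ρp y := le_trans (hi k hk.le y).1 (hρp_mem y).1
    exact ⟨phi_nonneg hμ.le h0le, phi_le_one hμ.le h0le⟩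
  -- measurable versions of the noise
  have haem : ∀ p : Site d × ℤ, AEMeasurable (fun ω => U ω p) P := by
    intro p
    by_contra hc
    have h1 := hunif p
    rw [Measure.map_of_not_aemeasurable hc] at h1
    have h2 : unif Set.univ = 1 := by
      simp [unif, Real.volume_Icc]
    rw [← h1] at h2
    simp at h2
  set U' : (Site d × ℤ) → Ω → ℝ := fun p => (haem p).mk _ with hU'def
  have hU'meas : ∀ p, Measurable (U' p) := fun p => (haem p).measurable_mk
  have hU'ae : ∀ p, (fun ω => U ω p) =ᵐ[P] U' p := fun p => (haem p).ae_eq_mk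
  have hindep' : iIndepFun U' P :=
    iIndepFun_congr hindep hU'ae
  have hmap' : ∀ p, P.map (U' p) = unif := by
    intro p
    rw [← Measure.map_congr (hU'ae p), hunif p]
  -- probability of an indicator event
  have hq : ∀ (p : Site d × ℤ) (c : ℝ), 0 ≤ c → c ≤ 1 →
      (P {ω | U' p ω ≤ c}).toReal = c := by
    intro p c hc0 hc1
    have h1 : P {ω | U' p ω ≤ c} = (P.map (U' p)) (Set.Iic c) := by
      rw [Measure.map_apply (hU'meas p) measurableSet_Iic]
      rfl
    have h2 : Set.Iic c ∩ Set.Icc 0 1 = Set.Icc 0 c := by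
      ext x
      simp only [Set.mem_inter_iff, Set.mem_Iic, Set.mem_Icc]
      constructor
      · rintro ⟨h, h', _⟩; exact ⟨h', h⟩
      · rintro ⟨h, h'⟩; exact ⟨h', h, h'.trans hc1⟩
    rw [h1, hmap' p, unif, Measure.restrict_apply measurableSet_Iic, h2, Real.volume_Icc]
    simp [hc0]
  -- the indicator random variables
  set Xm : (Site d × ℤ) → Ω → ℝ :=
    fun p ω => if U' p ω ≤ phi μ (ρm p.1) then 1 else 0 with hXmdef
  set Xp : (Site d × ℤ) → Ω → ℝ :=
    fun p ω => if U' p ω ≤ phi μ (ρp p.1) then 1 else 0 with hXpdef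
  have hXm_meas : ∀ p, Measurable (Xm p) := fun p =>
    Measurable.ite (hU'meas p measurableSet_Iic) measurable_const measurable_const
  have hXp_meas : ∀ p, Measurable (Xp p) := fun p =>
    Measurable.ite (hU'meas p measurableSet_Iic) measurable_const measurable_const
  have hXm01 : ∀ p ω, Xm p ω = 0 ∨ Xm p ω = 1 := by
    intro p ω
    by_cases h : U' p ω ≤ phi μ (ρm p.1) <;> simp [hXmdef, h]
  have hXp01 : ∀ p ω, Xp p ω = 0 ∨ Xp p ω = 1 := by
    intro p ω
    by_cases h : U' p ω ≤ phi μ (ρp p.1) <;> simp [hXpdef, h]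
  have hXm_indep : iIndepFun Xm P := by
    have := hindep'.comp (fun p (s : ℝ) => if s ≤ phi μ (ρm p.1) then (1:ℝ) else 0)
      (fun p => Measurable.ite measurableSet_Iic measurable_const measurable_const)
    exact this
  have hXp_indep : iIndepFun Xp P := by
    have := hindep'.comp (fun p (s : ℝ) => if s ≤ phi μ (ρp p.1) then (1:ℝ) else 0)
      (fun p => Measurable.ite measurableSet_Iic measurable_const measurable_const)
    exact this
  -- the index set
  set S : Finset (Site d × ℤ) := B.image (fun y => (y, (k : ℤ))) with hSdef
  have hinj : Function.Injective (fun y : Site d => (y, (k : ℤ))) := by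
    intro a b hab
    simpa using congrArg Prod.fst hab
  have hScard : (S.card : ℝ) = Vr := by
    rw [hSdef, Finset.card_image_of_injective _ hinj, hBdef, card_ball]
    push_cast
    ring
  -- mgf bounds
  have hmgfm : ∀ t : ℝ, ∀ p ∈ S, mgf (Xm p) P t ≤ Real.exp (t * phi μ (ρm p.1) + t ^ 2 / 8) := by
    intro t p _
    rw [hXmdef]
    rw [mgf_indicator_le (hU'meas p) (phi μ (ρm p.1)) t,
      hq p (phi μ (ρm p.1)) (hρm01 p.1).1 (hρm01 p.1).2]
    exact bernoulli_mgf_le _ t (hρm01 p.1).1 (hρm01 p.1).2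
  have hmgfp : ∀ t : ℝ, ∀ p ∈ S, mgf (Xp p) P t ≤ Real.exp (t * phi μ (ρp p.1) + t ^ 2 / 8) := by
    intro t p _
    rw [hXpdef]
    rw [mgf_indicator_le (hU'meas p) (phi μ (ρp p.1)) t,
      hq p (phi μ (ρp p.1)) (hρp01 p.1).1 (hρp01 p.1).2]
    exact bernoulli_mgf_le _ t (hρp01 p.1).1 (hρp01 p.1).2
  -- the means
  have hsum_m : ∑ p ∈ S, phi μ (ρm p.1) = ∑ y ∈ B, phi μ (ρm y) := by
    rw [hSdef, Finset.sum_image (fun a _ b _ hab => hinj hab)]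
  have hsum_p : ∑ p ∈ S, phi μ (ρp p.1) = ∑ y ∈ B, phi μ (ρp y) := by
    rw [hSdef, Finset.sum_image (fun a _ b _ hab => hinj hab)]
  -- CDP condition (iii) applied to the extremizers
  have hcdp_m := (hiii k hk 0 h0 ρm (fun y _ => hρm_mem y)).1
  have hcdp_p := (hiii k hk 0 h0 ρp (fun y _ => hρp_mem y)).2
  have hmm_lb : (1 + δ) * ζm (k + 1) 0 * Vr ≤ ∑ y ∈ B, phi μ (ρm y) := by
    rw [← le_div_iff₀ hVrpos]
    exact hcdp_m
  have hmp_ub : (∑ y ∈ B, phi μ (ρp y)) ≤ (1 - δ) * ζp (k + 1) 0 * Vr := by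
    rw [← div_le_iff₀ hVrpos]
    exact hcdp_p
  have hεm : ε ≤ ζm (k + 1) 0 := (hii (k + 1) hk).2 0 h0'
  have hεp : ε ≤ ζp (k + 1) 0 := hεm.trans (hi (k + 1) hk 0).2.2
  -- Chernoff bounds
  set bm : ℝ := Vr * ζm (k + 1) 0 with hbmdef
  set bp : ℝ := Vr * ζp (k + 1) 0 with hbpdef
  have ht : 0 < 4 * δ * ε := by positivity
  set E : ℝ := Real.exp (-(2 * δ ^ 2 * ε ^ 2 * Vr)) with hEdef
  have hcher_m : (P {ω | ∑ p ∈ S, Xm p ω ≤ bm}).toReal ≤ E := by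
    have h := chernoff_lower hXm_indep hXm_meas hXm01
      (hmgfm (-(4 * δ * ε))) (neg_nonpos.2 ht.le) bm
    refine h.trans ?_
    rw [hEdef, Real.exp_le_exp, hsum_m, hScard]
    have hd1 : (∑ y ∈ B, phi μ (ρm y)) - bm ≥ δ * ε * Vr := by
      have : bm + δ * ε * Vr ≤ (1 + δ) * ζm (k + 1) 0 * Vr := by
        rw [hbmdef]
        nlinarith [mul_le_mul_of_nonneg_left hεm (mul_pos hδ hVrpos).le]
      linarith
    nlinarith [hVrpos, mul_le_mul_of_nonneg_left hd1 ht.le]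
  have hcher_p : (P {ω | bp ≤ ∑ p ∈ S, Xp p ω}).toReal ≤ E := by
    have h := chernoff_upper hXp_indep hXp_meas hXp01
      (hmgfp (4 * δ * ε)) ht.le bp
    refine h.trans ?_
    rw [hEdef, Real.exp_le_exp, hsum_p, hScard]
    have hd1 : bp - (∑ y ∈ B, phi μ (ρp y)) ≥ δ * ε * Vr := by
      have : (∑ y ∈ B, phi μ (ρp y)) + δ * ε * Vr ≤ bp := by
        rw [hbpdef]
        nlinarith [mul_le_mul_of_nonneg_left hεp (mul_pos hδ hVrpos).le]
      linarith
    nlinarith [hVrpos, mul_le_mul_of_nonneg_left hd1 ht.le]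
  -- the exceptional null set
  have hZae : ∀ᵐ ω ∂P, ∀ p ∈ S, U ω p = U' p ω := by
    rw [Filter.eventually_all_finset]
    intro p _
    exact hU'ae p
  have hZ0 : P {ω | ¬ ∀ p ∈ S, U ω p = U' p ω} = 0 := ae_iff.mp hZae
  set Z' : Set Ω := (toMeasurable P {ω | ¬ ∀ p ∈ S, U ω p = U' p ω})ᶜ with hZ'def
  have hZ'meas : MeasurableSet Z' := (measurableSet_toMeasurable _ _).compl
  have hZ'0 : P Z'ᶜ = 0 := by
    rw [hZ'def, compl_compl, measure_toMeasurable]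
    exact hZ0
  have hZ'sub : ∀ ω ∈ Z', ∀ p ∈ S, U ω p = U' p ω := by
    intro ω hω
    by_contra hc
    exact hω (subset_toMeasurable P _ hc)
  -- good events
  set G1 : Set Ω := {ω | bm ≤ ∑ p ∈ S, Xm p ω} with hG1def
  set G2 : Set Ω := {ω | (∑ p ∈ S, Xp p ω) ≤ bp} with hG2def
  have hSm_meas : Measurable (fun ω => ∑ p ∈ S, Xm p ω) :=
    Finset.measurable_sum S (fun p _ => hXm_meas p)
  have hSp_meas : Measurable (fun ω => ∑ p ∈ S, Xp p ω) :=
    Finset.measurable_sum S (fun p _ => hXp_meas p)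
  have hG1meas : MeasurableSet G1 := measurableSet_le measurable_const hSm_meas
  have hG2meas : MeasurableSet G2 := measurableSet_le hSp_meas measurable_const
  have hGmeas : MeasurableSet (G1 ∩ G2 ∩ Z') := (hG1meas.inter hG2meas).inter hZ'meas
  -- inclusion into the target event
  have hsub : G1 ∩ G2 ∩ Z' ⊆ {ω | ∀ η : Config d,
      (∀ y ∈ ball d r (0 : Site d),
        localDensity d R y η ∈ Set.Icc (ζm k y) (ζp k y)) →
      (∑ y ∈ ball d r (0 : Site d),
          if U ω (y, (k : ℤ)) ≤ phi μ (localDensity d R y η) then (1 : ℝ) else 0)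
          / Vr
        ∈ Set.Icc (ζm (k + 1) 0) (ζp (k + 1) 0)} := by
    rintro ω ⟨⟨h1, h2⟩, hz⟩ η hη
    have hUeq := hZ'sub ω hz
    have hlow : (∑ p ∈ S, Xm p ω) ≤ ∑ y ∈ B,
        (if U ω (y, (k : ℤ)) ≤ phi μ (localDensity d R y η) then (1 : ℝ) else 0) := by
      rw [hSdef, Finset.sum_image (fun a _ b _ hab => hinj hab)]
      apply Finset.sum_le_sum
      intro y hy
      have hU : U ω (y, (k : ℤ)) = U' (y, (k : ℤ)) ω :=
        hUeq _ (Finset.mem_image_of_mem _ hy)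
      have hcle : phi μ (ρm y) ≤ phi μ (localDensity d R y η) :=
        hρm_min y _ (hη y hy)
      simp only [hXmdef]
      by_cases h : U' (y, (k : ℤ)) ω ≤ phi μ (ρm y)
      · rw [if_pos h, if_pos (by rw [hU]; exact h.trans hcle)]
      · rw [if_neg h]
        split <;> norm_num
    have hhigh : (∑ y ∈ B,
        (if U ω (y, (k : ℤ)) ≤ phi μ (localDensity d R y η) then (1 : ℝ) else 0))
        ≤ ∑ p ∈ S, Xp p ω := by
      rw [hSdef, Finset.sum_image (fun a _ b _ hab => hinj hab)]
      apply Finset.sum_le_sum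
      intro y hy
      have hU : U ω (y, (k : ℤ)) = U' (y, (k : ℤ)) ω :=
        hUeq _ (Finset.mem_image_of_mem _ hy)
      have hcle : phi μ (localDensity d R y η) ≤ phi μ (ρp y) :=
        hρp_max y _ (hη y hy)
      simp only [hXpdef]
      by_cases h : U ω (y, (k : ℤ)) ≤ phi μ (localDensity d R y η)
      · rw [if_pos h, if_pos (by rw [← hU]; exact h.trans hcle)]
      · rw [if_neg h]
        split <;> norm_num
    rw [Set.mem_setOf_eq] at h1 h2
    refine Set.mem_Icc.2 ⟨?_, ?_⟩
    · rw [le_div_iff₀ hVrpos]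
      calc ζm (k + 1) 0 * Vr = bm := by rw [hbmdef]; ring
        _ ≤ ∑ p ∈ S, Xm p ω := h1
        _ ≤ _ := hlow
    · rw [div_le_iff₀ hVrpos]
      calc (∑ y ∈ B, (if U ω (y, (k : ℤ)) ≤ phi μ (localDensity d R y η)
              then (1 : ℝ) else 0)) ≤ ∑ p ∈ S, Xp p ω := hhigh
        _ ≤ bp := h2
        _ = ζp (k + 1) 0 * Vr := by rw [hbpdef]; ring
  -- measure arithmetic
  have hE0 : 0 ≤ E := Real.exp_nonneg _
  have hPG1c : P G1ᶜ ≤ ENNReal.ofReal E := by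
    have hss : G1ᶜ ⊆ {ω | ∑ p ∈ S, Xm p ω ≤ bm} := by
      intro ω hω
      simp only [hG1def, Set.mem_compl_iff, Set.mem_setOf_eq] at hω
      exact le_of_not_ge hω
    refine le_trans (measure_mono hss) ?_
    rw [← ENNReal.ofReal_toReal (measure_ne_top P _)]
    exact ENNReal.ofReal_le_ofReal hcher_m
  have hPG2c : P G2ᶜ ≤ ENNReal.ofReal E := by
    have hss : G2ᶜ ⊆ {ω | bp ≤ ∑ p ∈ S, Xp p ω} := by
      intro ω hω
      simp only [hG2def, Set.mem_compl_iff, Set.mem_setOf_eq] at hω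
      exact le_of_not_ge hω
    refine le_trans (measure_mono hss) ?_
    rw [← ENNReal.ofReal_toReal (measure_ne_top P _)]
    exact ENNReal.ofReal_le_ofReal hcher_p
  have hcompl : P (G1 ∩ G2 ∩ Z')ᶜ ≤ ENNReal.ofReal E + ENNReal.ofReal E := by
    have heq : (G1 ∩ G2 ∩ Z')ᶜ = (G1ᶜ ∪ G2ᶜ) ∪ Z'ᶜ := by
      rw [Set.compl_inter, Set.compl_inter]
    calc P (G1 ∩ G2 ∩ Z')ᶜ ≤ P (G1ᶜ ∪ G2ᶜ) + P Z'ᶜ := by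
          rw [heq]; exact measure_union_le _ _
      _ ≤ P G1ᶜ + P G2ᶜ + P Z'ᶜ := by
          exact add_le_add (measure_union_le _ _) le_rfl
      _ = P G1ᶜ + P G2ᶜ := by rw [hZ'0, add_zero]
      _ ≤ _ := add_le_add hPG1c hPG2c
  have hPG : (1 : ENNReal) - (ENNReal.ofReal E + ENNReal.ofReal E) ≤ P (G1 ∩ G2 ∩ Z') := by
    have h := prob_compl_eq_one_sub (μ := P) hGmeas.compl
    rw [compl_compl] at h
    rw [h]
    exact tsub_le_tsub_left hcompl 1
  -- comparing the exponents
  have hcle : (δ * ε) / (1 / (2 * δ * ε) + 2 / 3) ≤ 2 * δ ^ 2 * ε ^ 2 := by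
    have hδε : 0 < 2 * δ * ε := by positivity
    have hden : (0:ℝ) < 1 / (2 * δ * ε) + 2 / 3 := by positivity
    rw [div_le_iff₀ hden]
    have h1 : 2 * δ ^ 2 * ε ^ 2 * (1 / (2 * δ * ε)) = δ * ε := by
      field_simp
    nlinarith [sq_nonneg (δ * ε)]
  have hEE : Real.exp (-((δ * ε) / (1 / (2 * δ * ε) + 2 / 3) * Vr)) ≥ E := by
    rw [hEdef, ge_iff_le, Real.exp_le_exp, neg_le_neg_iff]
    have := mul_le_mul_of_nonneg_right hcle hVrpos.le
    linarith
  calc ENNReal.ofReal (1 - 2 * Real.exp (-((δ * ε) / (1 / (2 * δ * ε) + 2 / 3) * Vr)))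
      ≤ ENNReal.ofReal (1 - (E + E)) := by
        apply ENNReal.ofReal_le_ofReal
        linarith
    _ ≤ (1 : ENNReal) - (ENNReal.ofReal E + ENNReal.ofReal E) := by
        rw [← ENNReal.ofReal_add hE0 hE0, ← ENNReal.ofReal_one]
        exact le_trans (le_of_eq (ENNReal.ofReal_sub 1 (by linarith))) le_rfl
    _ ≤ P (G1 ∩ G2 ∩ Z') := hPG
    _ ≤ _ := measure_mono hsub
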